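/- arXiv:2508.03768 — 4 statements merged into one kernel-verified Lean document; each statement's English description precedes it below -/
import Mathlib

section
/- For the KL divergence, the worst-case expectation over the σ-ball admits the dual form: inf_{P : KL(P,P*) ≤ σ} E_P[V] = sup_{η ≥ 0} { −η log(E_{P*}[exp(−V/η)]) − ησ } for any V : S → [0,H], with the convention that at η=0 the objective equals min over the support of P* of V. -/
/-!
Weak duality is the Donsker–Varadhan inequality: Gibbs' inequality `0 ≤ KL(P ‖ Q_η)` for the
tilted law `Q_η ∝ P* · exp (-V / η)` unfolds to
`-η log E_{P*}[exp (-V / η)] - η KL(P ‖ P*) ≤ E_P[V]`; at `η = 0` it is only the fact that `P`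
lives on the support of `P*`.

For the converse, `η ↦ KL(Q_η ‖ P*)` is continuous on `(0, ∞)` and bounded by `H / η`. If it
reaches `σ`, the intermediate value theorem gives `η` with `KL(Q_η ‖ P*) = σ`, and `Q_η` is then a
feasible law whose expectation of `V` is the dual objective at `η`. Otherwise every `Q_η` is
feasible, and `E_{Q_η}[V] ≤ V s - η log P*(s)` for every `s` in the support: letting `η → 0` at a
minimiser `s` of `V` shows that the infimum is at most the dual objective at `0`.
-/

open Finset Real Filter Topology

theorem sub_le_mul_log_div {p q : ℝ} (hp : 0 ≤ p) (hq : 0 ≤ q) (hpq : q = 0 → p = 0) :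
    p - q ≤ p * log (p / q) := by
  rcases hq.eq_or_lt with rfl | hq
  · simp [hpq rfl]
  have h := mul_le_mul_of_nonneg_left (self_sub_one_le_mul_log (div_nonneg hp hq.le)) hq.le
  rwa [mul_sub, mul_one, mul_div_cancel₀ _ hq.ne', ← mul_assoc, mul_div_cancel₀ _ hq.ne'] at h

section KLDuality

variable {S : Type*} [Fintype S]

noncomputable def klDivergence (P Q : S → ℝ) : ℝ := ∑ s, P s * log (P s / Q s)

theorem klDivergence_nonneg {P Q : S → ℝ} (hP : ∀ s, 0 ≤ P s) (hQ : ∀ s, 0 ≤ Q s)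
    (habs : ∀ s, Q s = 0 → P s = 0) (hsum : ∑ s, Q s ≤ ∑ s, P s) : 0 ≤ klDivergence P Q :=
  calc 0 ≤ ∑ s, (P s - Q s) := by rw [sum_sub_distrib]; linarith
    _ ≤ klDivergence P Q := sum_le_sum fun s _ => sub_le_mul_log_div (hP s) (hQ s) (habs s)

theorem klDivergence_self (P : S → ℝ) : klDivergence P P = 0 :=
  sum_eq_zero fun s _ => by by_cases h : P s = 0 <;> simp [h]

theorem exists_pos_of_sum_eq_one {P : S → ℝ} (hP : ∀ s, 0 ≤ P s) (hP1 : ∑ s, P s = 1) :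
    ∃ s, 0 < P s := by
  obtain ⟨s, -, hs⟩ := exists_ne_zero_of_sum_ne_zero (hP1 ▸ one_ne_zero : ∑ s, P s ≠ 0)
  exact ⟨s, (hP s).lt_of_ne' hs⟩

theorem sInf_image_le_sum_mul {T : Set S} {P V : S → ℝ} (hP : ∀ s, 0 ≤ P s)
    (hP1 : ∑ s, P s = 1) (hT : ∀ s ∉ T, P s = 0) : sInf (V '' T) ≤ ∑ s, P s * V s :=
  calc sInf (V '' T) = ∑ s, P s * sInf (V '' T) := by rw [← sum_mul, hP1, one_mul]
    _ ≤ _ := sum_le_sum fun s _ => by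
        by_cases hs : s ∈ T
        · exact mul_le_mul_of_nonneg_left
            (csInf_le (Set.toFinite _).bddBelow ⟨s, hs, rfl⟩) (hP s)
        · simp [hT s hs]

noncomputable def partitionFunction (Pstar V : S → ℝ) (η : ℝ) : ℝ :=
  ∑ s, Pstar s * exp (-(V s) / η)

noncomputable def gibbsTilt (Pstar V : S → ℝ) (η : ℝ) (s : S) : ℝ :=
  Pstar s * exp (-(V s) / η) / partitionFunction Pstar V η

noncomputable def klDualObjective (Pstar V : S → ℝ) (σ η : ℝ) : ℝ :=
  if η = 0 then sInf (V '' {s | 0 < Pstar s})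
  else -η * log (partitionFunction Pstar V η) - η * σ

variable {Pstar V : S → ℝ} {η : ℝ}

theorem mul_exp_le_partitionFunction (hPstar : ∀ s, 0 ≤ Pstar s) (s : S) :
    Pstar s * exp (-(V s) / η) ≤ partitionFunction Pstar V η :=
  single_le_sum (f := fun s => Pstar s * exp (-(V s) / η))
    (fun t _ => mul_nonneg (hPstar t) (exp_pos _).le) (mem_univ s)

theorem partitionFunction_pos (hPstar : ∀ s, 0 ≤ Pstar s) (hP1 : ∑ s, Pstar s = 1) :
    0 < partitionFunction Pstar V η := by
  obtain ⟨s, hs⟩ := exists_pos_of_sum_eq_one hPstar hP1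
  exact (mul_pos hs (exp_pos _)).trans_le (mul_exp_le_partitionFunction hPstar s)

theorem exp_neg_div_le_partitionFunction {H : ℝ} (hPstar : ∀ s, 0 ≤ Pstar s)
    (hP1 : ∑ s, Pstar s = 1) (hV : ∀ s, V s ≤ H) (hη : 0 < η) :
    exp (-H / η) ≤ partitionFunction Pstar V η :=
  calc exp (-H / η) = ∑ s, Pstar s * exp (-H / η) := by rw [← sum_mul, hP1, one_mul]
    _ ≤ _ := sum_le_sum fun s _ => mul_le_mul_of_nonneg_left
      (exp_le_exp.mpr (div_le_div_of_nonneg_right (neg_le_neg (hV s)) hη.le)) (hPstar s)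

theorem gibbsTilt_nonneg (hPstar : ∀ s, 0 ≤ Pstar s) (hZ : 0 < partitionFunction Pstar V η)
    (s : S) : 0 ≤ gibbsTilt Pstar V η s := by
  unfold gibbsTilt; have := hPstar s; positivity

theorem gibbsTilt_eq_zero_iff (hZ : 0 < partitionFunction Pstar V η) {s : S} :
    gibbsTilt Pstar V η s = 0 ↔ Pstar s = 0 := by
  simp [gibbsTilt, hZ.ne', exp_ne_zero]

theorem sum_gibbsTilt (hZ : 0 < partitionFunction Pstar V η) :
    ∑ s, gibbsTilt Pstar V η s = 1 := by
  simp only [gibbsTilt, ← sum_div]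
  exact div_self hZ.ne'

theorem klDivergence_gibbsTilt_right {P : S → ℝ} (hP : ∀ s, 0 ≤ P s)
    (hPstar : ∀ s, 0 ≤ Pstar s) (habs : ∀ s, Pstar s = 0 → P s = 0)
    (hZ : 0 < partitionFunction Pstar V η) :
    klDivergence P (gibbsTilt Pstar V η) = klDivergence P Pstar + (∑ s, P s * V s) / η
      + (∑ s, P s) * log (partitionFunction Pstar V η) := by
  simp only [klDivergence, sum_div, sum_mul, ← sum_add_distrib]
  refine sum_congr rfl fun s _ => ?_
  rcases (hP s).eq_or_lt with h | h
  · simp [← h]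
  have hs : 0 < Pstar s := (hPstar s).lt_of_ne fun h' => h.ne' (habs s h'.symm)
  rw [gibbsTilt, log_div h.ne' (by positivity), log_div h.ne' hs.ne',
    log_div (by positivity) hZ.ne', log_mul hs.ne' (exp_pos _).ne', log_exp]
  ring

theorem klDivergence_gibbsTilt (hPstar : ∀ s, 0 ≤ Pstar s)
    (hZ : 0 < partitionFunction Pstar V η) :
    klDivergence (gibbsTilt Pstar V η) Pstar =
      -(∑ s, gibbsTilt Pstar V η s * V s) / η - log (partitionFunction Pstar V η) := by
  have h := klDivergence_gibbsTilt_right (gibbsTilt_nonneg hPstar hZ) hPstar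
    (fun s => (gibbsTilt_eq_zero_iff hZ).mpr) hZ
  rw [klDivergence_self, sum_gibbsTilt hZ, one_mul] at h
  linear_combination -h

theorem sum_gibbsTilt_mul_eq (hPstar : ∀ s, 0 ≤ Pstar s)
    (hZ : 0 < partitionFunction Pstar V η) (hη : η ≠ 0) :
    ∑ s, gibbsTilt Pstar V η s * V s =
      -η * log (partitionFunction Pstar V η) - η * klDivergence (gibbsTilt Pstar V η) Pstar := by
  rw [klDivergence_gibbsTilt hPstar hZ]
  field_simp
  ring

/-- The Donsker–Varadhan inequality. -/
theorem neg_mul_log_partitionFunction_sub_le {P : S → ℝ} (hP : ∀ s, 0 ≤ P s)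
    (hP1 : ∑ s, P s = 1) (hPstar : ∀ s, 0 ≤ Pstar s) (habs : ∀ s, Pstar s = 0 → P s = 0)
    (hZ : 0 < partitionFunction Pstar V η) (hη : 0 < η) :
    -η * log (partitionFunction Pstar V η) - η * klDivergence P Pstar ≤ ∑ s, P s * V s := by
  have h := klDivergence_nonneg hP (gibbsTilt_nonneg hPstar hZ)
    (fun s hs => habs s ((gibbsTilt_eq_zero_iff hZ).mp hs)) (by rw [sum_gibbsTilt hZ, hP1])
  rw [klDivergence_gibbsTilt_right hP hPstar habs hZ, hP1, one_mul] at h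
  have := mul_nonneg hη.le h
  rw [mul_add, mul_add, mul_div_cancel₀ _ hη.ne'] at this
  linarith

theorem klDualObjective_le_sum_mul {P : S → ℝ} {σ : ℝ} (hPstar : ∀ s, 0 ≤ Pstar s)
    (hPstar1 : ∑ s, Pstar s = 1) (hP : ∀ s, 0 ≤ P s) (hP1 : ∑ s, P s = 1)
    (habs : ∀ s, Pstar s = 0 → P s = 0) (hKL : klDivergence P Pstar ≤ σ) (hη : 0 ≤ η) :
    klDualObjective Pstar V σ η ≤ ∑ s, P s * V s := by
  rcases hη.eq_or_lt with rfl | hη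
  · rw [klDualObjective, if_pos rfl]
    exact sInf_image_le_sum_mul hP hP1 fun s hs => habs s ((hPstar s).eq_of_not_lt hs).symm
  · rw [klDualObjective, if_neg hη.ne']
    have := neg_mul_log_partitionFunction_sub_le hP hP1 hPstar habs
      (partitionFunction_pos hPstar hPstar1) hη (V := V)
    nlinarith [mul_le_mul_of_nonneg_left hKL hη.le]

theorem klDivergence_gibbsTilt_le {H : ℝ} (hPstar : ∀ s, 0 ≤ Pstar s)
    (hP1 : ∑ s, Pstar s = 1) (hV : ∀ s, V s ∈ Set.Icc 0 H) (hη : 0 < η) :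
    klDivergence (gibbsTilt Pstar V η) Pstar ≤ H / η := by
  have hZ : 0 < partitionFunction Pstar V η := partitionFunction_pos hPstar hP1
  have hmean : 0 ≤ (∑ s, gibbsTilt Pstar V η s * V s) / η :=
    div_nonneg (sum_nonneg fun s _ => mul_nonneg (gibbsTilt_nonneg hPstar hZ s) (hV s).1) hη.le
  have hlog : -H / η ≤ log (partitionFunction Pstar V η) := (le_log_iff_exp_le hZ).mpr
    (exp_neg_div_le_partitionFunction hPstar hP1 (fun s => (hV s).2) hη)
  rw [klDivergence_gibbsTilt hPstar hZ, neg_div]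
  rw [neg_div] at hlog
  linarith

theorem continuousOn_klDivergence_gibbsTilt (hPstar : ∀ s, 0 ≤ Pstar s)
    (hP1 : ∑ s, Pstar s = 1) :
    ContinuousOn (fun η => klDivergence (gibbsTilt Pstar V η) Pstar) (Set.Ioi 0) := by
  have hexp : ∀ s, ContinuousOn (fun η : ℝ => exp (-(V s) / η)) (Set.Ioi 0) := fun s =>
    (continuousOn_const.div continuousOn_id fun η hη => ne_of_gt hη).rexp
  have hZ : ContinuousOn (partitionFunction Pstar V) (Set.Ioi 0) :=
    continuousOn_finsetSum _ fun s _ => continuousOn_const.mul (hexp s)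
  have hZne : ∀ η : ℝ, partitionFunction Pstar V η ≠ 0 :=
    fun η => (partitionFunction_pos hPstar hP1).ne'
  have hmean : ContinuousOn (fun η => ∑ s, gibbsTilt Pstar V η s * V s) (Set.Ioi 0) :=
    continuousOn_finsetSum _ fun s _ =>
      ((continuousOn_const.mul (hexp s)).div hZ fun η _ => hZne η).mul continuousOn_const
  refine ContinuousOn.congr ?_ fun η _ =>
    klDivergence_gibbsTilt hPstar (partitionFunction_pos hPstar hP1)
  exact (hmean.neg.div continuousOn_id fun η hη => ne_of_gt hη).sub (hZ.log fun η _ => hZne η)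

theorem exists_klDivergence_gibbsTilt_eq {H σ η₀ : ℝ} (hPstar : ∀ s, 0 ≤ Pstar s)
    (hP1 : ∑ s, Pstar s = 1) (hV : ∀ s, V s ∈ Set.Icc 0 H) (hσ : 0 < σ) (hη₀ : 0 < η₀)
    (hle : σ ≤ klDivergence (gibbsTilt Pstar V η₀) Pstar) :
    ∃ η, 0 < η ∧ klDivergence (gibbsTilt Pstar V η) Pstar = σ := by
  set η₁ := max η₀ (H / σ)
  have h01 : η₀ ≤ η₁ := le_max_left _ _
  have hη₁ : 0 < η₁ := hη₀.trans_le h01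
  have hge : klDivergence (gibbsTilt Pstar V η₁) Pstar ≤ σ := by
    refine (klDivergence_gibbsTilt_le hPstar hP1 hV hη₁).trans ?_
    rw [div_le_iff₀ hη₁, mul_comm]
    exact (div_le_iff₀ hσ).mp (le_max_right _ _)
  obtain ⟨η, hη, heq⟩ := intermediate_value_Icc' h01
    ((continuousOn_klDivergence_gibbsTilt hPstar hP1).mono fun x hx => hη₀.trans_le hx.1)
    ⟨hge, hle⟩
  exact ⟨η, hη₀.trans_le hη.1, heq⟩

theorem sum_gibbsTilt_mul_le (hPstar : ∀ s, 0 ≤ Pstar s) (hP1 : ∑ s, Pstar s = 1) {s : S}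
    (hs : 0 < Pstar s) (hη : 0 < η) :
    ∑ t, gibbsTilt Pstar V η t * V t ≤ V s - η * log (Pstar s) := by
  have hZ : 0 < partitionFunction Pstar V η := partitionFunction_pos hPstar hP1
  have hKL : 0 ≤ klDivergence (gibbsTilt Pstar V η) Pstar :=
    klDivergence_nonneg (gibbsTilt_nonneg hPstar hZ) hPstar
      (fun t ht => (gibbsTilt_eq_zero_iff hZ).mpr ht) (by rw [sum_gibbsTilt hZ, hP1])
  have hlog : log (Pstar s) - V s / η ≤ log (partitionFunction Pstar V η) := by
    have := log_le_log (mul_pos hs (exp_pos _))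
      (mul_exp_le_partitionFunction (V := V) (η := η) hPstar s)
    rwa [log_mul hs.ne' (exp_pos _).ne', log_exp, neg_div, ← sub_eq_add_neg] at this
  rw [sum_gibbsTilt_mul_eq hPstar hZ hη.ne']
  have := mul_le_mul_of_nonneg_left hlog hη.le
  rw [mul_sub, mul_div_cancel₀ _ hη.ne'] at this
  nlinarith [mul_nonneg hη.le hKL]

theorem exists_sInf_le_klDualObjective {H σ : ℝ} {X : Set ℝ} (hPstar : ∀ s, 0 ≤ Pstar s)
    (hP1 : ∑ s, Pstar s = 1) (hV : ∀ s, V s ∈ Set.Icc 0 H) (hσ : 0 < σ) (hX : BddBelow X)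
    (hmem : ∀ η, 0 < η → klDivergence (gibbsTilt Pstar V η) Pstar ≤ σ →
      ∑ s, gibbsTilt Pstar V η s * V s ∈ X) :
    ∃ η, 0 ≤ η ∧ sInf X ≤ klDualObjective Pstar V σ η := by
  by_cases hlarge : ∃ η, 0 < η ∧ σ ≤ klDivergence (gibbsTilt Pstar V η) Pstar
  · obtain ⟨η₀, hη₀, hle⟩ := hlarge
    obtain ⟨η, hη, hKL⟩ := exists_klDivergence_gibbsTilt_eq hPstar hP1 hV hσ hη₀ hle
    refine ⟨η, hη.le, (csInf_le hX (hmem η hη hKL.le)).trans_eq ?_⟩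
    rw [sum_gibbsTilt_mul_eq hPstar (partitionFunction_pos hPstar hP1) hη.ne', hKL,
      klDualObjective, if_neg hη.ne']
  · simp only [not_exists, not_and, not_le] at hlarge
    have hsupp : {s | 0 < Pstar s}.Nonempty := exists_pos_of_sum_eq_one hPstar hP1
    obtain ⟨s₀, hs₀, hVs₀⟩ := (hsupp.image V).csInf_mem (Set.toFinite _)
    have hlim : Tendsto (fun η => V s₀ - η * log (Pstar s₀)) (𝓝[>] 0) (𝓝 (V s₀)) :=
      ((continuous_const.sub (continuous_id.mul continuous_const)).tendsto' 0 _
        (by simp)).mono_left nhdsWithin_le_nhds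
    refine ⟨0, le_rfl, ?_⟩
    rw [klDualObjective, if_pos rfl, ← hVs₀]
    refine ge_of_tendsto hlim (eventually_mem_nhdsWithin.mono fun η hη => ?_)
    exact (csInf_le hX (hmem η hη (hlarge η hη).le)).trans
      (sum_gibbsTilt_mul_le hPstar hP1 hs₀ hη)

end KLDuality

theorem kl_divergence_dual_general {S : Type*} [Fintype S]
    (Pstar : S → ℝ) (hP0 : ∀ s, 0 ≤ Pstar s) (hP1 : ∑ s, Pstar s = 1)
    (σ : ℝ) (hσ : 0 < σ) (H : ℝ)
    (V : S → ℝ) (hV : ∀ s, V s ∈ Set.Icc 0 H) :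
    sInf {x : ℝ | ∃ P : S → ℝ, (∀ s, 0 ≤ P s) ∧ (∑ s, P s = 1) ∧
        (∀ s, Pstar s = 0 → P s = 0) ∧
        (∑ s, P s * Real.log (P s / Pstar s) ≤ σ) ∧ x = ∑ s, P s * V s}
      = sSup {x : ℝ | ∃ η : ℝ, 0 ≤ η ∧
          x = if η = 0 then sInf (V '' {s | 0 < Pstar s})
              else -η * Real.log (∑ s, Pstar s * Real.exp (-(V s) / η)) - η * σ} := by
  set primal := {x : ℝ | ∃ P : S → ℝ, (∀ s, 0 ≤ P s) ∧ (∑ s, P s = 1) ∧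
        (∀ s, Pstar s = 0 → P s = 0) ∧
        (∑ s, P s * Real.log (P s / Pstar s) ≤ σ) ∧ x = ∑ s, P s * V s}
  set dual := {x : ℝ | ∃ η : ℝ, 0 ≤ η ∧ x = klDualObjective Pstar V σ η}
  have weak : ∀ d ∈ dual, ∀ x ∈ primal, d ≤ x := by
    rintro _ ⟨η, hη, rfl⟩ _ ⟨P, hP, hPsum, habs, hKL, rfl⟩
    exact klDualObjective_le_sum_mul hP0 hP1 hP hPsum habs hKL hη
  have hprimal : ∑ s, Pstar s * V s ∈ primal :=
    ⟨Pstar, hP0, hP1, fun _ h => h, (klDivergence_self Pstar).trans_le hσ.le, rfl⟩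
  have hdual : klDualObjective Pstar V σ 0 ∈ dual := ⟨0, le_rfl, rfl⟩
  obtain ⟨η, hη, hle⟩ := exists_sInf_le_klDualObjective hP0 hP1 hV hσ ⟨_, weak _ hdual⟩
    fun η _ hKL => by
      have hZ := partitionFunction_pos hP0 hP1 (V := V) (η := η)
      exact ⟨_, gibbsTilt_nonneg hP0 hZ, sum_gibbsTilt hZ,
        fun _ => (gibbsTilt_eq_zero_iff hZ).mpr, hKL, rfl⟩
  exact le_antisymm (hle.trans (le_csSup ⟨_, fun d hd => weak d hd _ hprimal⟩ ⟨η, hη, rfl⟩))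
    (csSup_le ⟨_, hdual⟩ fun d hd => le_csInf ⟨_, hprimal⟩ (weak d hd))

/-- Dual representation of the worst-case expectation over a KL-divergence ball,
with the convention that at `η = 0` the dual objective is the minimum of `V`
over the support of the nominal distribution. -/
theorem kl_divergence_dual {S : Type*} [Fintype S] [Nonempty S]
    (Pstar : S → ℝ) (hP0 : ∀ s, 0 ≤ Pstar s) (hP1 : ∑ s, Pstar s = 1)
    (σ : ℝ) (hσ : 0 < σ) (H : ℝ) (hH : 0 < H)
    (V : S → ℝ) (hV : ∀ s, V s ∈ Set.Icc 0 H) :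
    sInf {x : ℝ | ∃ P : S → ℝ, (∀ s, 0 ≤ P s) ∧ (∑ s, P s = 1) ∧
        (∀ s, Pstar s = 0 → P s = 0) ∧
        (∑ s, P s * Real.log (P s / Pstar s) ≤ σ) ∧ x = ∑ s, P s * V s}
      = sSup {x : ℝ | ∃ η : ℝ, 0 ≤ η ∧
          x = if η = 0 then sInf (V '' {s | 0 < Pstar s})
              else -η * Real.log (∑ s, Pstar s * Real.exp (-(V s) / η)) - η * σ} :=
  kl_divergence_dual_general Pstar hP0 hP1 σ hσ H V hV
end

section
/- Let S be finite, q ∈ Δ(S), and let V̄, V̲, V* : S → [0,H] satisfy V̲(s) ≤ V*(s) ≤ V̄(s) for all s. Then |Var_q[(V̄ + V̲)/2] − Var_q[V*]| ≤ 4H · E_q[V̄ − V̲]. -/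
/-!
Writing `c = 𝔼 f + 𝔼 g`, the difference of variances is `𝔼[(f - g)(f + g - c)]`. For `f, g`
with values in `[0, H]` both `f + g` and `c` lie in `[0, 2H]`, so the difference is at most
`2H 𝔼|f - g|`. The midpoint of `V̲ ≤ V* ≤ V̄` is within `(V̄ - V̲) / 2` of `V*`.
-/

open Finset

section WeightedVariance

variable {S : Type*} [Fintype S]

def weightedMean (q f : S → ℝ) : ℝ := ∑ s, q s * f s

def weightedVariance (q f : S → ℝ) : ℝ :=
  weightedMean q (fun s => f s ^ 2) - weightedMean q f ^ 2

variable {q : S → ℝ}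

theorem weightedMean_mem_Icc (hq0 : ∀ s, 0 ≤ q s) (hq1 : ∑ s, q s = 1) {f : S → ℝ}
    {a b : ℝ} (hf : ∀ s, f s ∈ Set.Icc a b) : weightedMean q f ∈ Set.Icc a b :=
  (convex_Icc a b).sum_mem (fun s _ => hq0 s) hq1 (fun s _ => hf s)

theorem weightedVariance_sub_weightedVariance (f g : S → ℝ) :
    weightedVariance q f - weightedVariance q g =
      ∑ s, q s * (f s - g s) * (f s + g s - (weightedMean q f + weightedMean q g)) := by
  set c := weightedMean q f + weightedMean q g
  have hexpand : ∑ s, q s * (f s - g s) * (f s + g s - c) =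
      weightedMean q (fun s => f s ^ 2) - weightedMean q (fun s => g s ^ 2)
        - c * (weightedMean q f - weightedMean q g) := by
    simp only [weightedMean]
    rw [← sum_sub_distrib, ← sum_sub_distrib, mul_sum, ← sum_sub_distrib]
    exact sum_congr rfl fun s _ => by ring
  rw [hexpand, weightedVariance, weightedVariance]
  ring

theorem abs_weightedVariance_sub_le (hq0 : ∀ s, 0 ≤ q s) (hq1 : ∑ s, q s = 1) {H : ℝ}
    {f g : S → ℝ} (hf : ∀ s, f s ∈ Set.Icc 0 H) (hg : ∀ s, g s ∈ Set.Icc 0 H) :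
    |weightedVariance q f - weightedVariance q g| ≤ 2 * H * ∑ s, q s * |f s - g s| := by
  obtain ⟨hmf0, hmf⟩ := weightedMean_mem_Icc hq0 hq1 hf
  obtain ⟨hmg0, hmg⟩ := weightedMean_mem_Icc hq0 hq1 hg
  rw [weightedVariance_sub_weightedVariance, mul_sum]
  refine (abs_sum_le_sum_abs _ _).trans (sum_le_sum fun s _ => ?_)
  have hdev : |f s + g s - (weightedMean q f + weightedMean q g)| ≤ 2 * H := by
    obtain ⟨hfs0, hfs⟩ := hf s
    obtain ⟨hgs0, hgs⟩ := hg s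
    rw [abs_le]
    constructor <;> linarith
  rw [abs_mul, abs_mul, abs_of_nonneg (hq0 s), mul_comm (2 * H)]
  exact mul_le_mul_of_nonneg_left hdev (mul_nonneg (hq0 s) (abs_nonneg _))

end WeightedVariance

/-- Variance of the midpoint of sandwiching value functions is close to the
variance of the sandwiched function. -/
theorem variance_midpoint_sandwich {S : Type*} [Fintype S]
    (q : S → ℝ) (hq0 : ∀ s, 0 ≤ q s) (hq1 : ∑ s, q s = 1)
    (H : ℝ) (hH : 0 < H)
    (Vup Vlo Vstar : S → ℝ)
    (hup : ∀ s, Vup s ∈ Set.Icc 0 H) (hlo : ∀ s, Vlo s ∈ Set.Icc 0 H)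
    (hstar : ∀ s, Vstar s ∈ Set.Icc 0 H)
    (hsand : ∀ s, Vlo s ≤ Vstar s ∧ Vstar s ≤ Vup s) :
    |((∑ s, q s * ((Vup s + Vlo s) / 2) ^ 2) - (∑ s, q s * ((Vup s + Vlo s) / 2)) ^ 2)
        - ((∑ s, q s * (Vstar s) ^ 2) - (∑ s, q s * Vstar s) ^ 2)|
      ≤ 4 * H * ∑ s, q s * (Vup s - Vlo s) := by
  have hmid : ∀ s, (Vup s + Vlo s) / 2 ∈ Set.Icc 0 H := fun s => by
    obtain ⟨hu0, hu⟩ := hup s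
    obtain ⟨hl0, hl⟩ := hlo s
    constructor <;> linarith
  have hclose : ∀ s, |(Vup s + Vlo s) / 2 - Vstar s| ≤ (Vup s - Vlo s) / 2 := fun s => by
    obtain ⟨hls, hsu⟩ := hsand s
    rw [abs_le]
    constructor <;> linarith
  have hgap : 0 ≤ ∑ s, q s * (Vup s - Vlo s) :=
    sum_nonneg fun s _ => mul_nonneg (hq0 s) (by linarith [hsand s])
  calc _ ≤ 2 * H * ∑ s, q s * |(Vup s + Vlo s) / 2 - Vstar s| :=
        abs_weightedVariance_sub_le hq0 hq1 hmid hstar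
    _ ≤ 2 * H * ∑ s, q s * ((Vup s - Vlo s) / 2) := by
        gcongr with s
        · exact hq0 s
        · exact hclose s
    _ = H * ∑ s, q s * (Vup s - Vlo s) := by
        rw [mul_assoc, mul_sum, mul_sum, mul_sum]
        exact sum_congr rfl fun s _ => by ring
    _ ≤ 4 * H * ∑ s, q s * (Vup s - Vlo s) := by linarith [mul_nonneg hH.le hgap]
end

section
/- Bretagnolle–Huber inequality: for probability measures P and Q on the same measurable space and any measurable event A, P(A) + Q(Aᶜ) ≥ (1/2) exp(−KL(P,Q)). -/
/-!
Write `p = dP/dQ`. Splitting `∫ min(p, 1) dQ` over `A` and `Aᶜ` bounds it by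
`P(A) + Q(Aᶜ)`. Since `√p = √(min(p, 1) · max(p, 1))` and `∫ max(p, 1) dQ ≤ ∫ (p + 1) dQ = 2`,
Cauchy–Schwarz gives `(∫ √p dQ)² ≤ 2 ∫ min(p, 1) dQ`. Finally
`∫ √p dQ = ∫ p^(-1/2) dP ≥ exp(-KL(P, Q)/2)` by Jensen's inequality for `exp`.
-/

open MeasureTheory Real
open scoped ENNReal

lemma ENNReal.ofReal_exp_mul_log_toReal {a : ℝ≥0∞} (h0 : a ≠ 0) (htop : a ≠ ∞)
    (t : ℝ) :
    ENNReal.ofReal (exp (t * Real.log a.toReal)) = a ^ t := by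
  rw [mul_comm, ← Real.rpow_def_of_pos (ENNReal.toReal_pos h0 htop), ENNReal.toReal_rpow,
    ENNReal.ofReal_toReal (ENNReal.rpow_ne_top_of_ne_zero h0 htop)]

namespace MeasureTheory

variable {α : Type*} {mα : MeasurableSpace α}

lemma lintegral_rpow_half_mul_sq_le {μ : Measure α} {f g : α → ℝ≥0∞}
    (hf : AEMeasurable f μ) (hg : AEMeasurable g μ) :
    (∫⁻ x, (f x * g x) ^ (1 / 2 : ℝ) ∂μ) ^ 2 ≤ (∫⁻ x, f x ∂μ) * ∫⁻ x, g x ∂μ := by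
  have hsq : ∀ a : ℝ≥0∞, (a ^ (1 / 2 : ℝ)) ^ (2 : ℝ) = a := fun a => by
    rw [← ENNReal.rpow_mul]; norm_num
  have holder := ENNReal.lintegral_mul_le_Lp_mul_Lq μ Real.HolderConjugate.two_two
    (hf.pow_const (1 / 2 : ℝ)) (hg.pow_const (1 / 2 : ℝ))
  simp only [Pi.mul_apply, hsq,
    ← ENNReal.mul_rpow_of_nonneg _ _ (by norm_num : (0 : ℝ) ≤ 1 / 2)] at holder
  calc (∫⁻ x, (f x * g x) ^ (1 / 2 : ℝ) ∂μ) ^ 2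
      ≤ (((∫⁻ x, f x ∂μ) * ∫⁻ x, g x ∂μ) ^ (1 / 2 : ℝ)) ^ 2 := by gcongr
    _ = (∫⁻ x, f x ∂μ) * ∫⁻ x, g x ∂μ := by
      rw [← ENNReal.rpow_natCast, Nat.cast_ofNat, hsq]

lemma lintegral_min_rnDeriv_one_le (μ ν : Measure α) {A : Set α} (hA : MeasurableSet A) :
    ∫⁻ x, min (μ.rnDeriv ν x) 1 ∂ν ≤ μ A + ν Aᶜ := by
  rw [← lintegral_add_compl _ hA]
  gcongr
  · exact (setLIntegral_mono' hA fun x _ => min_le_left _ _).trans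
      (Measure.setLIntegral_rnDeriv_le A)
  · exact (setLIntegral_mono' hA.compl fun x _ => min_le_right _ _).trans
      (setLIntegral_one Aᶜ).le

lemma lintegral_rnDeriv_rpow_half_sq_le (μ ν : Measure α) :
    (∫⁻ x, μ.rnDeriv ν x ^ (1 / 2 : ℝ) ∂ν) ^ 2
      ≤ (μ Set.univ + ν Set.univ) * ∫⁻ x, min (μ.rnDeriv ν x) 1 ∂ν := by
  have hp := Measure.measurable_rnDeriv μ ν
  have hmax : ∫⁻ x, max (μ.rnDeriv ν x) 1 ∂ν ≤ μ Set.univ + ν Set.univ := by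
    calc ∫⁻ x, max (μ.rnDeriv ν x) 1 ∂ν ≤ ∫⁻ x, (μ.rnDeriv ν x + 1) ∂ν :=
          lintegral_mono fun x => max_le le_self_add le_add_self
      _ ≤ μ Set.univ + ν Set.univ := by
          rw [lintegral_add_right _ measurable_const, lintegral_one]
          gcongr
          exact Measure.lintegral_rnDeriv_le
  calc (∫⁻ x, μ.rnDeriv ν x ^ (1 / 2 : ℝ) ∂ν) ^ 2
      = (∫⁻ x, (min (μ.rnDeriv ν x) 1 * max (μ.rnDeriv ν x) 1) ^ (1 / 2 : ℝ) ∂ν) ^ 2 := by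
        simp only [min_mul_max, mul_one]
    _ ≤ (∫⁻ x, min (μ.rnDeriv ν x) 1 ∂ν) * ∫⁻ x, max (μ.rnDeriv ν x) 1 ∂ν :=
        lintegral_rpow_half_mul_sq_le (hp.min measurable_const).aemeasurable
          (hp.max measurable_const).aemeasurable
    _ ≤ (μ Set.univ + ν Set.univ) * ∫⁻ x, min (μ.rnDeriv ν x) 1 ∂ν := by
        rw [mul_comm]; gcongr

lemma lintegral_rnDeriv_rpow_sub_one {μ ν : Measure α} [SigmaFinite μ]
    [μ.HaveLebesgueDecomposition ν] (hμν : μ ≪ ν) {r : ℝ} (hr : 0 < r) :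
    ∫⁻ x, μ.rnDeriv ν x ^ (r - 1) ∂μ = ∫⁻ x, μ.rnDeriv ν x ^ r ∂ν := by
  rw [← lintegral_rnDeriv_mul hμν ((Measure.measurable_rnDeriv μ ν).pow_const _).aemeasurable]
  refine lintegral_congr_ae ?_
  filter_upwards [Measure.rnDeriv_lt_top μ ν] with x hx
  rcases eq_or_ne (μ.rnDeriv ν x) 0 with h0 | h0
  · rw [h0, zero_mul, ENNReal.zero_rpow_of_pos hr]
  · conv_rhs =>
      rw [← add_sub_cancel (1 : ℝ) r, ENNReal.rpow_add _ _ h0 hx.ne, ENNReal.rpow_one]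

lemma ofReal_exp_integral_le_lintegral {μ : Measure α} [IsProbabilityMeasure μ] {f : α → ℝ}
    (hf : Integrable f μ) :
    ENNReal.ofReal (exp (∫ x, f x ∂μ)) ≤ ∫⁻ x, ENNReal.ofReal (exp (f x)) ∂μ := by
  by_cases hfin : ∫⁻ x, ENNReal.ofReal (exp (f x)) ∂μ = ∞
  · simp [hfin]
  have hexp : Integrable (fun x => exp (f x)) μ :=
    ⟨continuous_exp.comp_aestronglyMeasurable hf.1,
      (hasFiniteIntegral_iff_ofReal (.of_forall fun x => (exp_pos _).le)).2
        (lt_top_iff_ne_top.2 hfin)⟩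
  rw [← ofReal_integral_eq_lintegral_ofReal hexp (.of_forall fun x => (exp_pos _).le)]
  exact ENNReal.ofReal_le_ofReal <| convexOn_exp.map_integral_le continuous_exp.continuousOn
    isClosed_univ (.of_forall fun x => Set.mem_univ _) hf hexp

lemma ofReal_exp_mul_integral_log_rnDeriv_le {μ ν : Measure α} [IsProbabilityMeasure μ]
    [μ.HaveLebesgueDecomposition ν] (hμν : μ ≪ ν)
    (hint : Integrable (fun x => log (μ.rnDeriv ν x).toReal) μ) (t : ℝ) :
    ENNReal.ofReal (exp (t * ∫ x, log (μ.rnDeriv ν x).toReal ∂μ))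
      ≤ ∫⁻ x, μ.rnDeriv ν x ^ t ∂μ := by
  rw [← integral_const_mul]
  refine (ofReal_exp_integral_le_lintegral (hint.const_mul t)).trans_eq (lintegral_congr_ae ?_)
  filter_upwards [Measure.rnDeriv_pos hμν, hμν.ae_le (Measure.rnDeriv_lt_top μ ν)]
    with x h0 htop
  exact ENNReal.ofReal_exp_mul_log_toReal h0.ne' htop.ne t

end MeasureTheory

/-- Bretagnolle–Huber inequality: for probability measures `P`, `Q` and any
measurable event `A`, we have `P(A) + Q(Aᶜ) ≥ (1/2) exp (-KL(P,Q))`, where the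
KL divergence is expressed as the integral of the log Radon–Nikodym derivative
(the case `¬ P ≪ Q`, i.e. `KL = ∞`, being trivial). -/
theorem bretagnolle_huber {Ω : Type*} [MeasurableSpace Ω]
    (P Q : Measure Ω) [IsProbabilityMeasure P] [IsProbabilityMeasure Q]
    (A : Set Ω) (hA : MeasurableSet A)
    (hac : P ≪ Q)
    (hint : Integrable (fun x => Real.log ((P.rnDeriv Q x).toReal)) P) :
    ENNReal.ofReal ((1 / 2) *
        Real.exp (-(∫ x, Real.log ((P.rnDeriv Q x).toReal) ∂P)))
      ≤ P A + Q Aᶜ := by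
  set KL := ∫ x, log (P.rnDeriv Q x).toReal ∂P
  have jensen :
      ENNReal.ofReal (exp (-(1 / 2) * KL)) ≤ ∫⁻ x, P.rnDeriv Q x ^ (1 / 2 : ℝ) ∂Q := by
    have h := ofReal_exp_mul_integral_log_rnDeriv_le hac hint (1 / 2 - 1)
    rwa [lintegral_rnDeriv_rpow_sub_one hac (by norm_num), show (1 / 2 : ℝ) - 1 = -(1 / 2) by
      norm_num] at h
  have cauchy_schwarz := lintegral_rnDeriv_rpow_half_sq_le P Q
  rw [measure_univ, measure_univ, one_add_one_eq_two] at cauchy_schwarz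
  calc ENNReal.ofReal (1 / 2 * exp (-KL))
      = 2⁻¹ * ENNReal.ofReal (exp (-(1 / 2) * KL)) ^ 2 := by
        rw [ENNReal.ofReal_mul (by norm_num), ← ENNReal.ofReal_pow (exp_pos _).le,
          ← exp_nat_mul]
        congr 2
        · rw [one_div, ENNReal.ofReal_inv_of_pos two_pos, ENNReal.ofReal_ofNat]
        · push_cast; ring_nf
    _ ≤ 2⁻¹ * (2 * ∫⁻ x, min (P.rnDeriv Q x) 1 ∂Q) := by
        gcongr; exact (pow_le_pow_left' jensen 2).trans cauchy_schwarz
    _ = ∫⁻ x, min (P.rnDeriv Q x) 1 ∂Q :=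
        ENNReal.inv_mul_cancel_left (by norm_num) (by norm_num)
    _ ≤ P A + Q Aᶜ := lintegral_min_rnDeriv_one_le P Q hA
end

section
/- Let α ∈ (0, 1/2], set β = (1/2) log(1/α), and assume β ≥ 4 and log(1/α) ≥ β. Let p = 1 − α. Then the KL divergence γ = KL(Ber(1/β) ∥ Ber(p)) satisfies (1 − 2/β)·log(1/α) ≤ γ ≤ (1 − 1/β)·log(1/α). -/
/-!
Write `KL(q ∥ p) = q log (1/p) + (1 - q) log (1/(1 - p)) - H(q)` with `H` the binary entropy.
Dropping the nonnegative first term and using `H ≤ log 2 < 1` gives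
`KL(q ∥ p) ≥ (1 - q) log (1/(1 - p)) - 1`; for `q ≤ p` both `log (q/p)` and `log (1 - q)` are
nonpositive, which gives `KL(q ∥ p) ≤ (1 - q) log (1/(1 - p))`. With `q = 1/β`, `1 - p = α` and
`log (1/α) = 2β`, the lower bound is `2β - 3 ≥ 2β - 4 = (1 - 2/β) log (1/α)`.
-/

open Real

noncomputable def bernoulliKLDiv (q p : ℝ) : ℝ :=
  q * log (q / p) + (1 - q) * log ((1 - q) / (1 - p))

lemma mul_log_div_eq_sub (q : ℝ) {p : ℝ} (hp : p ≠ 0) :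
    q * log (q / p) = q * log p⁻¹ - q * log q⁻¹ := by
  rcases eq_or_ne q 0 with rfl | hq
  · simp
  · rw [log_div hq hp, log_inv, log_inv]
    ring

lemma bernoulliKLDiv_eq_sub_binEntropy (q : ℝ) {p : ℝ} (hp₀ : p ≠ 0) (hp₁ : 1 - p ≠ 0) :
    bernoulliKLDiv q p = q * log p⁻¹ + (1 - q) * log (1 - p)⁻¹ - binEntropy q := by
  rw [bernoulliKLDiv, mul_log_div_eq_sub q hp₀, mul_log_div_eq_sub (1 - q) hp₁, binEntropy]
  ring

lemma sub_log_two_le_bernoulliKLDiv {q p : ℝ} (hq : 0 ≤ q) (hp₀ : 0 < p) (hp₁ : p < 1) :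
    (1 - q) * log (1 - p)⁻¹ - log 2 ≤ bernoulliKLDiv q p := by
  have hlog_inv_p : 0 ≤ q * log p⁻¹ :=
    mul_nonneg hq (log_nonneg (one_le_inv₀ hp₀ |>.mpr hp₁.le))
  rw [bernoulliKLDiv_eq_sub_binEntropy q hp₀.ne' (sub_pos.mpr hp₁).ne']
  linarith [binEntropy_le_log_two (p := q)]

lemma bernoulliKLDiv_le {q p : ℝ} (hq₀ : 0 ≤ q) (hqp : q ≤ p) (hp₁ : p < 1) :
    bernoulliKLDiv q p ≤ (1 - q) * log (1 - p)⁻¹ := by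
  have h1p : 0 < 1 - p := sub_pos.mpr hp₁
  have h1q : 0 ≤ 1 - q := by linarith
  have hfirst : q * log (q / p) ≤ 0 :=
    mul_nonpos_of_nonneg_of_nonpos hq₀
      (log_nonpos (div_nonneg hq₀ (hq₀.trans hqp)) (div_le_one_of_le₀ hqp (hq₀.trans hqp)))
  have hsecond : log ((1 - q) / (1 - p)) ≤ log (1 - p)⁻¹ := by
    rcases h1q.eq_or_lt with h | h
    · rw [← h, zero_div, log_zero]
      exact log_nonneg (one_le_inv₀ h1p |>.mpr (by linarith))
    · rw [div_eq_mul_inv]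
      exact log_le_log (by positivity) (mul_le_of_le_one_left (by positivity) (by linarith))
  unfold bernoulliKLDiv
  linarith [mul_le_mul_of_nonneg_left hsecond h1q]

theorem kl_ber_inv_beta_bounds_general (α : ℝ) (hα : α ∈ Set.Ioc (0 : ℝ) (1 / 2))
    (β : ℝ) (hβ : β = Real.log (1 / α) / 2) (hβ4 : 4 ≤ β)
    (p : ℝ) (hp : p = 1 - α) :
    (1 - 2 / β) * Real.log (1 / α)
        ≤ (1 / β) * Real.log ((1 / β) / p)
            + (1 - 1 / β) * Real.log ((1 - 1 / β) / (1 - p)) ∧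
    (1 / β) * Real.log ((1 / β) / p)
        + (1 - 1 / β) * Real.log ((1 - 1 / β) / (1 - p))
      ≤ (1 - 1 / β) * Real.log (1 / α) := by
  obtain ⟨hα₀, hα₁⟩ := hα
  have hβ₀ : 0 < β := by linarith
  have hq₀ : 0 ≤ 1 / β := by positivity
  have hqp : 1 / β ≤ p := by
    rw [hp, div_le_iff₀ hβ₀]
    nlinarith
  have hp₁ : p < 1 := by linarith
  have hlog : log (1 - p)⁻¹ = log (1 / α) := by rw [hp, sub_sub_cancel, one_div]
  have hscale : 1 / β * log (1 / α) = 2 := by field_simp; linarith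
  refine ⟨?_, hlog ▸ bernoulliKLDiv_le hq₀ hqp hp₁⟩
  calc (1 - 2 / β) * log (1 / α)
      ≤ (1 - 1 / β) * log (1 / α) - log 2 := by
        have : 2 / β * log (1 / α) = 4 := by rw [div_eq_mul_one_div, mul_assoc, hscale]; norm_num
        linarith [log_two_lt_d9]
    _ ≤ bernoulliKLDiv (1 / β) p :=
        hlog ▸ sub_log_two_le_bernoulliKLDiv hq₀ (by linarith) hp₁

/-- Bounds on `γ = KL(Ber (1/β) ∥ Ber p)` for `p = 1 - α`, `β = log(1/α)/2`. -/
theorem kl_ber_inv_beta_bounds (α : ℝ) (hα : α ∈ Set.Ioc (0 : ℝ) (1 / 2))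
    (β : ℝ) (hβ : β = Real.log (1 / α) / 2) (hβ4 : 4 ≤ β)
    (hlogβ : β ≤ Real.log (1 / α))
    (p : ℝ) (hp : p = 1 - α) :
    (1 - 2 / β) * Real.log (1 / α)
        ≤ (1 / β) * Real.log ((1 / β) / p)
            + (1 - 1 / β) * Real.log ((1 - 1 / β) / (1 - p)) ∧
    (1 / β) * Real.log ((1 / β) / p)
        + (1 - 1 / β) * Real.log ((1 - 1 / β) / (1 - p))
      ≤ (1 - 1 / β) * Real.log (1 / α) :=
  kl_ber_inv_beta_bounds_general α hα β hβ hβ4 p hp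
end
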